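/- Let G be a split, semisimple, simply connected algebraic group of rank r over a field k, with split maximal torus T and Weyl group W. Then the fundamental characters b₁,…,b_r (traces of the fundamental representations) are algebraically independent over k and the quotient T/W is isomorphic to affine space: T/W ≅ Spec k[b₁,…,b_r]. -/

import Mathlib

/-!
Order the weights by a height function `w` that is positive on the fundamental weights and
equal to `1` on every simple root (ties broken lexicographically). Such a `w` exists because
the weights of each fundamental representation form a `W`-invariant multiset, so their sum is
fixed by every simple reflection and therefore vanishes; this exhibits a multiple of each `μ_i`
as a nonnegative combination of the simple roots, so the simple roots form a basis with
nonnegative inverse matrix.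

For this order `b_i` has leading term `e^{μ_i}`, hence a monomial `∏ b_i ^ d_i` has leading term
`e^{∑ d_i μ_i}`. Distinct monomials thus have distinct leading terms, which gives algebraic
independence. An invariant element has a dominant leading weight, since a simple reflection
would otherwise raise it; subtracting the matching monomial lowers the leading weight, and the
process stops because only finitely many dominant weights lie below a given height.
-/

open AddMonoidAlgebra

theorem AddMonoidAlgebra.domCongr_eq_self_iff {R A M : Type*} [CommSemiring R] [Semiring A]
    [Algebra R A] [AddMonoid M] (e : M ≃+ M) (x : A[M]) :
    domCongr R A e x = x ↔ ∀ m, x.coeff (e m) = x.coeff m := by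
  rw [AddMonoidAlgebra.ext_iff, Finsupp.ext_iff]
  simp only [coeff_domCongr]
  exact ⟨fun h m => by simpa using (h (e m)).symm, fun h n => by simpa using (h (e.symm n)).symm⟩

theorem Finsupp.map_sum_nsmul_eq_self {G : Type*} [AddCommMonoid G] (m : G →₀ ℕ) (σ : G ≃+ G)
    (hm : ∀ x, m (σ x) = m x) : σ (m.sum fun x n => n • x) = m.sum fun x n => n • x := by
  have hmap : m.equivMapDomain σ.toEquiv = m := by
    ext x
    simpa using (hm (σ.symm x)).symm
  conv_rhs => rw [← hmap]
  rw [Finsupp.sum_equivMapDomain, map_finsuppSum]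
  simp [map_nsmul]

section LeadingTerm

variable {k G M : Type*} [AddCommMonoid G] [AddCommMonoid M] [LinearOrder M] (h : G →+ M)

def HasLeadingTerm [Semiring k] (x : k[G]) (p : G) : Prop :=
  x.coeff p = 1 ∧ ∀ q ∈ x.coeff.support, q ≠ p → h q < h p

variable {h}

theorem HasLeadingTerm.le [Semiring k] {x : k[G]} {p q : G} (hx : HasLeadingTerm h x p)
    (hq : q ∈ x.coeff.support) : h q ≤ h p := by
  rcases eq_or_ne q p with rfl | hqp
  · rfl
  · exact (hx.2 q hq hqp).le

theorem hasLeadingTerm_one [Semiring k] : HasLeadingTerm h (1 : k[G]) 0 := by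
  classical
  refine ⟨by simp [one_def], fun q hq hq0 => absurd ?_ hq0⟩
  exact Finset.mem_singleton.mp (Finsupp.support_single_subset (by simpa [one_def] using hq))

theorem HasLeadingTerm.linearIndependent [Ring k] {ι : Type*} {x : ι → k[G]} {p : ι → G}
    (hx : ∀ i, HasLeadingTerm h (x i) (p i)) (hp : Function.Injective (h ∘ p)) :
    LinearIndependent k x := by
  classical
  rw [linearIndependent_iff']
  intro s c hsum
  by_contra! hc
  obtain ⟨i₀, hi₀, hmax⟩ := Finset.exists_max_image (s.filter fun i => c i ≠ 0) (h ∘ p)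
    (by simpa [Finset.filter_nonempty_iff] using hc)
  rw [Finset.mem_filter] at hi₀
  have hcoeff := congrArg (fun z : k[G] => z.coeff (p i₀)) hsum
  simp only [coeff_sum, coeff_smul, Finset.sum_apply', Finsupp.smul_apply, smul_eq_mul] at hcoeff
  rw [Finset.sum_eq_single i₀ _ (fun hi => absurd hi₀.1 hi), (hx i₀).1, mul_one] at hcoeff
  · exact hi₀.2 (by simpa using hcoeff)
  intro i hi hii₀
  by_cases hci : c i = 0
  · rw [hci, zero_mul]
  by_cases hmem : p i₀ ∈ (x i).coeff.support
  · have hlt := (hx i).2 _ hmem (fun he => hii₀ (hp (congrArg h he)).symm)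
    exact absurd hlt (hmax i (Finset.mem_filter.mpr ⟨hi, hci⟩)).not_gt
  · rw [Finsupp.notMem_support_iff.mp hmem, mul_zero]

theorem HasLeadingTerm.lt_of_mem_support_sub_smul [Ring k] {x y : k[G]} {p : G}
    (hx : HasLeadingTerm h x p) (hy : ∀ q ∈ y.coeff.support, q ≠ p → h q < h p) {q : G}
    (hq : q ∈ (y - y.coeff p • x).coeff.support) : h q < h p := by
  classical
  have hqp : q ≠ p := by
    rintro rfl
    simp [hx.1] at hq
  have hq' : q ∈ y.coeff.support ∪ x.coeff.support := by
    simp only [Finsupp.mem_support_iff, Finset.mem_union] at hq ⊢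
    by_contra! h0
    simp [h0.1, h0.2] at hq
  rcases Finset.mem_union.mp hq' with hqy | hqx
  · exact hy q hqy hqp
  · exact hx.2 q hqx hqp

variable [IsOrderedCancelAddMonoid M]

theorem HasLeadingTerm.mul [Semiring k] {x y : k[G]} {p q : G} (hx : HasLeadingTerm h x p)
    (hy : HasLeadingTerm h y q) : HasLeadingTerm h (x * y) (p + q) := by
  classical
  have hlt : ∀ p' ∈ x.coeff.support, ∀ q' ∈ y.coeff.support, p' ≠ p ∨ q' ≠ q →
      h (p' + q') < h (p + q) := by
    rintro p' hp' q' hq' (hp'p | hq'q) <;> rw [map_add, map_add]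
    · exact add_lt_add_of_lt_of_le (hx.2 p' hp' hp'p) (hy.le hq')
    · exact add_lt_add_of_le_of_lt (hx.le hp') (hy.2 q' hq' hq'q)
  have hunique : UniqueAdd x.coeff.support y.coeff.support p q := fun p' q' hp' hq' hsum => by
    by_contra hne
    exact (hlt p' hp' q' hq' (not_and_or.mp hne)).ne (congrArg h hsum)
  refine ⟨by rw [coeff_mul_add_of_uniqueAdd hunique, hx.1, hy.1, one_mul], fun r hr hrpq => ?_⟩
  obtain ⟨p', hp', q', hq', rfl⟩ := Finset.mem_add.mp (support_coeff_mul_subset x y hr)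
  refine hlt p' hp' q' hq' ?_
  by_contra! hpq
  exact hrpq (by rw [hpq.1, hpq.2])

theorem HasLeadingTerm.pow [Semiring k] {x : k[G]} {p : G} (hx : HasLeadingTerm h x p)
    (n : ℕ) : HasLeadingTerm h (x ^ n) (n • p) := by
  induction n with
  | zero => simpa using hasLeadingTerm_one
  | succ n ih => simpa [pow_succ, succ_nsmul] using ih.mul hx

theorem HasLeadingTerm.finsuppProd [CommSemiring k] {ι : Type*} {x : ι → k[G]} {p : ι → G}
    (hx : ∀ i, HasLeadingTerm h (x i) (p i)) (d : ι →₀ ℕ) :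
    HasLeadingTerm h (d.prod fun i n => x i ^ n) (d.sum fun i n => n • p i) := by
  classical
  induction d using Finsupp.induction with
  | zero => simpa using hasLeadingTerm_one
  | single_add i n d hi hn ih =>
    rw [Finsupp.prod_add_index' (by simp) (fun _ _ _ => pow_add _ _ _),
      Finsupp.sum_add_index' (by simp) (fun _ _ _ => add_smul _ _ _)]
    simp only [pow_zero, zero_smul, Finsupp.prod_single_index, Finsupp.sum_single_index]
    exact ((hx i).pow n).mul ih

end LeadingTerm

section Lattice

variable {ι : Type*} [Fintype ι]

def weightHeight (w : ι → ℚ) : (ι → ℤ) →+ ℚ where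
  toFun lam := ∑ j, (lam j : ℚ) * w j
  map_zero' := by simp
  map_add' lam mu := by simp only [Pi.add_apply, Int.cast_add, add_mul, Finset.sum_add_distrib]

theorem weightHeight_apply (w : ι → ℚ) (lam : ι → ℤ) :
    weightHeight w lam = ∑ j, (lam j : ℚ) * w j := rfl

def lexHeight (w : ι → ℚ) : (ι → ℤ) →+ Lex (ℚ × Lex (ι → ℤ)) where
  toFun lam := toLex (weightHeight w lam, toLex lam)
  map_zero' := by simp
  map_add' lam mu := by rw [map_add]; rfl

theorem lexHeight_injective (w : ι → ℚ) : Function.Injective (lexHeight w) :=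
  fun _ _ he => congrArg (fun z : Lex (ℚ × Lex (ι → ℤ)) => ofLex (ofLex z).2) he

variable [LinearOrder ι] {w : ι → ℚ}

theorem weightHeight_le_of_lexHeight_le {lam mu : ι → ℤ}
    (hle : lexHeight w lam ≤ lexHeight w mu) : weightHeight w lam ≤ weightHeight w mu := by
  rcases Prod.Lex.le_iff.mp hle with h | h
  · exact h.le
  · exact h.1.le

theorem lexHeight_lt_add (lam : ι → ℤ) {δ : ι → ℤ} (hδ : 0 < weightHeight w δ) :
    lexHeight w lam < lexHeight w (lam + δ) := by
  rw [map_add]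
  exact lt_add_of_pos_right _ (Prod.Lex.lt_iff.mpr (Or.inl hδ))

theorem lexHeight_lt_of_sub_eq_sum_nsmul {a : ι → ι → ℤ} (haw : ∀ m, weightHeight w (a m) = 1)
    {lam μ : ι → ℤ} (hne : lam ≠ μ) {c : ι → ℕ} (hc : μ - lam = ∑ n, c n • a n) :
    lexHeight w lam < lexHeight w μ := by
  obtain ⟨n, hn⟩ : ∃ n, c n ≠ 0 := by
    by_contra! hc0
    exact hne (sub_eq_zero.mp (by simp [hc, hc0])).symm
  have hpos : 0 < weightHeight w (μ - lam) := by
    rw [hc, map_sum]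
    simp only [map_nsmul, haw, nsmul_one]
    exact_mod_cast Finset.sum_pos' (fun _ _ => Nat.zero_le _)
      ⟨n, Finset.mem_univ _, Nat.pos_of_ne_zero hn⟩
  simpa using lexHeight_lt_add lam hpos

end Lattice

section RootCone

variable {ι : Type*} [Fintype ι]

theorem exists_nsmul_eq_sum_nsmul_of_reflection_invariant {a : ι → ι → ℤ} (ha : ∀ j, a j j = 2)
    {s : ι → AddAut (ι → ℤ)} (hs : ∀ j lam, s j lam = lam - lam j • a j)
    {m : (ι → ℤ) →₀ ℕ} (hm : ∀ j lam, m (s j lam) = m lam) {μ : ι → ℤ} (hμ : m μ ≠ 0)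
    (hdom : ∀ lam, m lam ≠ 0 → ∃ c : ι → ℕ, μ - lam = ∑ n, c n • a n) :
    ∃ (N : ℕ) (d : ι → ℕ), 0 < N ∧ N • μ = ∑ n, d n • a n := by
  classical
  have hsum : ∑ lam ∈ m.support, m lam • lam = 0 := by
    funext j
    have hfix := Finsupp.map_sum_nsmul_eq_self m (s j) (hm j)
    rw [hs] at hfix
    have := congrFun (sub_eq_self.mp hfix) j
    simp only [Pi.smul_apply, ha, smul_eq_mul, Pi.zero_apply] at this
    simpa [Finsupp.sum] using this
  choose! c hc using hdom
  refine ⟨∑ lam ∈ m.support, m lam, fun n => ∑ lam ∈ m.support, m lam * c lam n,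
    Finset.sum_pos' (fun _ _ => Nat.zero_le _)
      ⟨μ, Finsupp.mem_support_iff.mpr hμ, Nat.pos_of_ne_zero hμ⟩, ?_⟩
  calc (∑ lam ∈ m.support, m lam) • μ
      = ∑ lam ∈ m.support, m lam • μ - ∑ lam ∈ m.support, m lam • lam := by
        rw [hsum, sub_zero, Finset.sum_smul]
    _ = ∑ lam ∈ m.support, m lam • ∑ n, c lam n • a n := by
        rw [← Finset.sum_sub_distrib]
        refine Finset.sum_congr rfl fun lam hlam => ?_
        rw [← smul_sub, hc lam (Finsupp.mem_support_iff.mp hlam)]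
    _ = ∑ n, (∑ lam ∈ m.support, m lam * c lam n) • a n := by
        simp only [Finset.smul_sum, Finset.sum_smul, smul_smul]
        exact Finset.sum_comm

theorem exists_weightHeight_eq_one [DecidableEq ι] (a : ι → ι → ℤ)
    (hcone : ∀ i, ∃ (N : ℕ) (d : ι → ℕ), 0 < N ∧ N • (Pi.single i 1 : ι → ℤ) = ∑ m, d m • a m) :
    ∃ w : ι → ℚ, (∀ i, 0 < w i) ∧ ∀ m, weightHeight w (a m) = 1 := by
  choose N d hN hNd using hcone
  have hNd' : ∀ i j, ∑ m, (d i m : ℚ) * a m j = if i = j then (N i : ℚ) else 0 := by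
    intro i j
    have := congrFun (hNd i) j
    simp only [Finset.sum_apply, Pi.smul_apply, Pi.single_apply, nsmul_eq_mul] at this
    by_cases hij : i = j
    · subst hij
      exact_mod_cast (by simpa using this.symm)
    · rw [if_neg hij]
      exact_mod_cast (by simpa [Ne.symm hij] using this.symm)
  let A : Matrix ι ι ℚ := Matrix.of fun m j => (a m j : ℚ)
  let P : Matrix ι ι ℚ := Matrix.of fun i m => (d i m : ℚ) / N i
  have hPA : P * A = 1 := by
    ext i j
    have hNi : (N i : ℚ) ≠ 0 := by exact_mod_cast (hN i).ne'
    simp only [Matrix.mul_apply, P, A, Matrix.of_apply, Matrix.one_apply, div_mul_eq_mul_div,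
      ← Finset.sum_div, hNd' i j]
    split_ifs <;> simp [hNi]
  have hAP : A * P = 1 := mul_eq_one_comm.mp hPA
  refine ⟨fun i => ∑ m, P i m, fun i => ?_, fun m => ?_⟩
  · have hd : d i ≠ 0 := by
      rintro hd
      have := congrFun (hNd i) i
      simp [hd, (hN i).ne'] at this
    obtain ⟨m, hm⟩ := Function.ne_iff.mp hd
    refine Finset.sum_pos' (fun m _ => div_nonneg (Nat.cast_nonneg _) (Nat.cast_nonneg _))
      ⟨m, Finset.mem_univ _, div_pos ?_ (by exact_mod_cast hN i)⟩
    exact_mod_cast Nat.pos_of_ne_zero hm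
  · calc weightHeight (fun i => ∑ m, P i m) (a m) = ∑ m', (A * P) m m' := by
          simp only [weightHeight_apply, Matrix.mul_apply, Finset.mul_sum, A, Matrix.of_apply]
          exact Finset.sum_comm
      _ = 1 := by simp [hAP, Matrix.one_apply]

theorem finite_setOf_nonneg_weightHeight_le {w : ι → ℚ} (hw : ∀ i, 0 < w i) (c : ℚ) :
    {lam : ι → ℤ | (∀ j, 0 ≤ lam j) ∧ weightHeight w lam ≤ c}.Finite := by
  refine (Set.Finite.pi (t := fun j => Set.Icc 0 ⌊c / w j⌋) fun j => Set.finite_Icc _ _).subset ?_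
  rintro lam ⟨hnonneg, hle⟩ j -
  refine ⟨hnonneg j, Int.le_floor.mpr ((le_div_iff₀ (hw j)).mpr (le_trans ?_ hle))⟩
  exact Finset.single_le_sum (f := fun j => (lam j : ℚ) * w j)
    (fun i _ => mul_nonneg (by exact_mod_cast hnonneg i) (hw i).le) (Finset.mem_univ j)

end RootCone

section Invariants

variable {k ι : Type*} [CommRing k] [Fintype ι] [LinearOrder ι] {a : ι → ι → ℤ}
  {s : ι → AddAut (ι → ℤ)} {w : ι → ℚ} {b : ι → k[ι → ℤ]}

theorem hasLeadingTerm_prod_pow (hb : ∀ i, HasLeadingTerm (lexHeight w) (b i) (Pi.single i 1))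
    (d : ι →₀ ℕ) :
    HasLeadingTerm (lexHeight w) (d.prod fun i n => b i ^ n) (fun j => (d j : ℤ)) := by
  classical
  convert HasLeadingTerm.finsuppProd hb d using 1
  funext j
  simp [Finsupp.sum, Pi.single_apply]

theorem algebraicIndependent_of_hasLeadingTerm
    (hb : ∀ i, HasLeadingTerm (lexHeight w) (b i) (Pi.single i 1)) : AlgebraicIndependent k b := by
  refine LinearMap.injective_of_linearIndependent (f := (MvPolynomial.aeval b).toLinearMap)
    (MvPolynomial.basisMonomials ι k).span_eq ?_
  have hmon : (MvPolynomial.aeval b).toLinearMap ∘ MvPolynomial.basisMonomials ι k =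
      fun d => d.prod fun i n => b i ^ n := by
    funext d
    simp [MvPolynomial.aeval_monomial, ← one_def]
  rw [hmon]
  refine HasLeadingTerm.linearIndependent (hasLeadingTerm_prod_pow hb) ?_
  intro d d' he
  ext j
  simpa using congrFun (lexHeight_injective w he) j

theorem nonneg_of_forall_lexHeight_le (hs : ∀ j lam, s j lam = lam - lam j • a j)
    (haw : ∀ m, weightHeight w (a m) = 1) {y : k[ι → ℤ]} (hy : ∀ j, domCongr k k (s j) y = y)
    {p : ι → ℤ} (hp : p ∈ y.coeff.support)
    (hmax : ∀ q ∈ y.coeff.support, lexHeight w q ≤ lexHeight w p) (j : ι) : 0 ≤ p j := by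
  by_contra! hneg
  have hmem : s j p ∈ y.coeff.support := by
    rw [Finsupp.mem_support_iff, (domCongr_eq_self_iff _ y).mp (hy j)]
    exact Finsupp.mem_support_iff.mp hp
  have hlt : lexHeight w p < lexHeight w (s j p) := by
    rw [hs, sub_eq_add_neg, ← neg_smul]
    refine lexHeight_lt_add p ?_
    rw [map_zsmul, haw, zsmul_eq_mul, mul_one]
    exact_mod_cast neg_pos.mpr hneg
  exact (hmax _ hmem).not_gt hlt

variable (w) in
def dominantBelow (y : k[ι → ℤ]) : Set (ι → ℤ) :=
  {lam | (∀ j, 0 ≤ lam j) ∧ ∃ q ∈ y.coeff.support, lexHeight w lam ≤ lexHeight w q}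

theorem finite_dominantBelow (hw : ∀ i, 0 < w i) (y : k[ι → ℤ]) : (dominantBelow w y).Finite := by
  refine (y.coeff.support.finite_toSet.biUnion fun q _ =>
    finite_setOf_nonneg_weightHeight_le hw (weightHeight w q)).subset ?_
  rintro lam ⟨hdom, q, hq, hle⟩
  exact Set.mem_iUnion₂.mpr ⟨q, hq, hdom, weightHeight_le_of_lexHeight_le hle⟩

theorem dominantBelow_ssubset {y y' : k[ι → ℤ]} {p : ι → ℤ} (hp : p ∈ y.coeff.support)
    (hpdom : ∀ j, 0 ≤ p j) (hy' : ∀ q ∈ y'.coeff.support, lexHeight w q < lexHeight w p) :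
    dominantBelow w y' ⊂ dominantBelow w y := by
  refine (Set.ssubset_iff_of_subset ?_).mpr ⟨p, ⟨hpdom, p, hp, le_rfl⟩, ?_⟩
  · rintro lam ⟨hdom, q, hq, hle⟩
    exact ⟨hdom, p, hp, (hle.trans_lt (hy' q hq)).le⟩
  · rintro ⟨-, q, hq, hle⟩
    exact (hle.trans_lt (hy' q hq)).false

theorem mem_adjoin_of_forall_domCongr_eq (hs : ∀ j lam, s j lam = lam - lam j • a j)
    (hw : ∀ i, 0 < w i) (haw : ∀ m, weightHeight w (a m) = 1)
    (hb : ∀ i, HasLeadingTerm (lexHeight w) (b i) (Pi.single i 1))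
    (hbinv : ∀ i j, domCongr k k (s j) (b i) = b i) (y : k[ι → ℤ])
    (hy : ∀ j, domCongr k k (s j) y = y) : y ∈ Algebra.adjoin k (Set.range b) := by
  classical
  have hmem (d : ι →₀ ℕ) : (d.prod fun i n => b i ^ n) ∈ Algebra.adjoin k (Set.range b) :=
    Subalgebra.prod_mem _ fun i _ =>
      Subalgebra.pow_mem _ (Algebra.subset_adjoin (Set.mem_range_self i)) _
  have hinv (d : ι →₀ ℕ) (j : ι) :
      domCongr k k (s j) (d.prod fun i n => b i ^ n) = d.prod fun i n => b i ^ n := by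
    simp [Finsupp.prod, map_prod, map_pow, hbinv]
  induction hn : (dominantBelow w y).ncard using Nat.strong_induction_on generalizing y with
  | _ n ih =>
  rcases eq_or_ne y 0 with rfl | hy0
  · exact Subalgebra.zero_mem _
  obtain ⟨p, hp, hmax⟩ := y.coeff.support.exists_max_image (lexHeight w)
    (Finsupp.support_nonempty_iff.mpr (mt coeff_eq_zero.mp hy0))
  have hpdom := nonneg_of_forall_lexHeight_le hs haw hy hp hmax
  set d : ι →₀ ℕ := Finsupp.equivFunOnFinite.symm fun j => (p j).toNat
  have hlead : HasLeadingTerm (lexHeight w) (d.prod fun i n => b i ^ n) p := by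
    convert hasLeadingTerm_prod_pow hb d using 1
    funext j
    simp [d, Int.toNat_of_nonneg (hpdom j)]
  set y' := y - y.coeff p • d.prod fun i n => b i ^ n
  have hy'lt (q : ι → ℤ) (hq : q ∈ y'.coeff.support) : lexHeight w q < lexHeight w p :=
    hlead.lt_of_mem_support_sub_smul
      (fun q hq hqp => (hmax q hq).lt_of_ne ((lexHeight_injective w).ne hqp)) hq
  have hy'mem : y' ∈ Algebra.adjoin k (Set.range b) :=
    ih _ (hn ▸ Set.ncard_lt_ncard (dominantBelow_ssubset hp hpdom hy'lt)
      (finite_dominantBelow hw y)) y'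
      (fun j => by simp only [y', map_sub, map_smul, hy j, hinv d j]) rfl
  rw [← sub_add_cancel y (y.coeff p • d.prod fun i n => b i ^ n)]
  exact add_mem hy'mem (Subalgebra.smul_mem _ (hmem d) _)

end Invariants

/-- Steinberg: For a split semisimple simply connected group `G` of rank `r`
over a field `k`, with split maximal torus `T` and Weyl group `W`, the fundamental
characters `b₁,…,b_r` are algebraically independent over `k`, and `T/W ≅ Spec k[b₁,…,b_r]`,
i.e. the invariant ring `k[T]^W` is the polynomial ring on the `b_i`.

`k[T]` is the group algebra of the character lattice `ℤ^r` (written in fundamental-weight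
coordinates); `W ≤ Aut(ℤ^r)` is the group generated by the simple reflections
`s_j(λ) = λ − λ_j α_j`; `b_i` is the character of the fundamental representation, a sum of
its weights with multiplicities `wt i`, which are `W`-invariant with highest weight `μ_i`
of multiplicity one. -/
theorem stmt_6
    (k : Type*) [Field k]
    (r : ℕ)
    (a : Fin r → (Fin r → ℤ))          -- the simple roots, in fundamental-weight coordinates
    (ha : ∀ i, a i i = 2)
    (s : Fin r → AddAut (Fin r → ℤ))   -- the simple reflections
    (hs : ∀ (j : Fin r) (lam : Fin r → ℤ), s j lam = lam - lam j • a j)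
    (W : AddSubgroup (AddAut (Fin r → ℤ)))           -- the Weyl group
    (hW : W = AddSubgroup.closure (Set.range s))
    (wt : Fin r → ((Fin r → ℤ) →₀ ℕ))  -- the weights with multiplicities of ρ_{μ_i}
    -- W-invariance of the weights with multiplicities
    (hinv : ∀ g ∈ W, ∀ (i : Fin r) (lam : Fin r → ℤ), wt i (g lam) = wt i lam)
    -- the highest weight of ρ_{μ_i} is the fundamental weight μ_i, with multiplicity one
    (hhw : ∀ i, wt i (Pi.single i 1) = 1)
    (hhw' : ∀ (i : Fin r) (lam : Fin r → ℤ), wt i lam ≠ 0 →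
        ∃ c : Fin r → ℕ, ∀ j, (Pi.single i 1 : Fin r → ℤ) j - lam j = ∑ m, (c m : ℤ) * a m j)
    -- the fundamental characters b_i ∈ k[T]
    (b : Fin r → AddMonoidAlgebra k (Fin r → ℤ))
    (hb : ∀ i, b i = (wt i).sum fun lam mult => AddMonoidAlgebra.single lam (mult : k)) :
    AlgebraicIndependent k b ∧
      ∀ x : AddMonoidAlgebra k (Fin r → ℤ),
        x ∈ Algebra.adjoin k (Set.range b) ↔
          ∀ g ∈ W, AddMonoidAlgebra.domCongr k k ((g : AddAut (Fin r → ℤ)) : (Fin r → ℤ) ≃+ (Fin r → ℤ)) x = x := by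
  have hsW (j : Fin r) : s j ∈ W := hW ▸ AddSubgroup.subset_closure (Set.mem_range_self j)
  have hbcoeff (i : Fin r) (lam : Fin r → ℤ) : (b i).coeff lam = wt i lam := by
    classical
    rw [hb i, Finsupp.sum, coeff_sum, Finset.sum_apply']
    by_cases h : wt i lam = 0 <;> simp [coeff_single, Finsupp.single_apply, h]
  have hbinv (g) (hg : g ∈ W) (i : Fin r) : domCongr k k g (b i) = b i :=
    (domCongr_eq_self_iff _ _).mpr fun lam => by rw [hbcoeff, hbcoeff, hinv g hg]
  have hdom (i : Fin r) (lam : Fin r → ℤ) (hlam : wt i lam ≠ 0) :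
      ∃ c : Fin r → ℕ, Pi.single i 1 - lam = ∑ m, c m • a m := by
    obtain ⟨c, hc⟩ := hhw' i lam hlam
    exact ⟨c, funext fun j => by simp [hc j, Finset.sum_apply]⟩
  obtain ⟨w, hw, haw⟩ := exists_weightHeight_eq_one a fun i =>
    exists_nsmul_eq_sum_nsmul_of_reflection_invariant ha hs (fun j => hinv _ (hsW j) i)
      (by simp [hhw i]) (hdom i)
  have hlead (i : Fin r) : HasLeadingTerm (lexHeight w) (b i) (Pi.single i 1) :=
    ⟨by simp [hbcoeff, hhw], fun lam hlam hne =>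
      have ⟨_, hc⟩ := hdom i lam fun h => by simp [hbcoeff, h] at hlam
      lexHeight_lt_of_sub_eq_sum_nsmul haw hne hc⟩
  refine ⟨algebraicIndependent_of_hasLeadingTerm hlead, fun x => ⟨fun hx g hg => ?_, fun hx =>
    mem_adjoin_of_forall_domCongr_eq hs hw haw hlead (fun i j => hbinv _ (hsW j) i) x
      (fun j => hx _ (hsW j))⟩⟩
  exact AlgHom.adjoin_le_equalizer (domCongr k k g).toAlgHom (AlgHom.id k _)
    (by rintro _ ⟨i, rfl⟩; exact hbinv g hg i) hx
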